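/- arXiv:1610.00855 — 8 statements merged into one kernel-verified Lean document; each statement's English description precedes it below -/
import Mathlib

section
/- A graph is a split graph if and only if it contains no induced subgraph isomorphic to C4, C5, or 2K2. -/
open SimpleGraph

variable {V : Type*}

/-- `I` is an independent set in `G`. -/
def IndepOn (G : SimpleGraph V) (I : Set V) : Prop :=
  ∀ ⦃u⦄, u ∈ I → ∀ ⦃v⦄, v ∈ I → ¬ G.Adj u v

/-- `(K, I)` is a split partition of `G`: `K` a clique, `I` independent,
partitioning the vertex set. -/
def SplitPartition (G : SimpleGraph V) (K I : Set V) : Prop :=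
  Disjoint K I ∧ K ∪ I = Set.univ ∧ G.IsClique K ∧ IndepOn G I

/-- The disjoint union of two edges, `2K_2`, as a graph on `Fin 4`. -/
def twoK2 : SimpleGraph (Fin 4) where
  Adj u v := (u = 0 ∧ v = 1) ∨ (u = 1 ∧ v = 0) ∨ (u = 2 ∧ v = 3) ∨ (u = 3 ∧ v = 2)
  symm := by
    constructor
    intro u v h
    fin_cases u <;> fin_cases v <;> simp_all
  loopless := by
    constructor
    intro u h
    fin_cases u <;> simp_all


/-!
Split graphs are closed under induced subgraphs, and `C₄`, `C₅`, `2K₂` are not split: in each of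
them, every two-colouring either puts a non-edge on the clique side or an edge on the other side.

Conversely (Földes–Hammer), take a maximum clique `K` whose vertices have the largest degree sum,
which amounts to minimising the number of edges outside `K`. If an edge `xy` lay outside `K`, a
`C₄` forces the non-neighbours in `K` of one endpoint, say `x`, to be non-neighbours of `y` too, and
a `2K₂` forces `x` to have exactly one non-neighbour `z ∈ K`. Exchanging `z` for `x` and comparing
degrees produces a neighbour `w` of `z` missed by `x`, and the vertices `x, y, z, w` together with a
non-neighbour of `y` in `K` span a `C₄`, a `C₅` or a `2K₂`.
-/

namespace SimpleGraph

variable {W : Type*} {G : SimpleGraph V} {H : SimpleGraph W}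

def IsSplit (G : SimpleGraph V) : Prop :=
  ∃ K I : Set V, SplitPartition G K I

theorem IsSplit.comap (f : H ↪g G) (hG : G.IsSplit) : H.IsSplit := by
  obtain ⟨K, I, hdisj, hcover, hK, hI⟩ := hG
  refine ⟨f ⁻¹' K, f ⁻¹' I, hdisj.preimage f, ?_, ?_, ?_⟩
  · rw [← Set.preimage_union, hcover, Set.preimage_univ]
  · exact fun u hu v hv huv => f.map_adj_iff.mp (hK hu hv (f.injective.ne huv))
  · exact fun u hu v hv huv => hI hu hv (f.map_adj_iff.mpr huv)

theorem IsSplit.exists_bool (hG : G.IsSplit) :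
    ∃ χ : V → Bool, ∀ u v, (G.Adj u v → χ u ∨ χ v) ∧ (u ≠ v → χ u → χ v → G.Adj u v) := by
  classical
  obtain ⟨K, I, -, hcover, hK, hI⟩ := hG
  have hmem : ∀ v, v ∉ K → v ∈ I := fun v hv =>
    ((Set.mem_union _ _ _).mp (hcover ▸ Set.mem_univ v)).resolve_left hv
  refine ⟨fun v => decide (v ∈ K), fun u v => ⟨fun huv => ?_, fun huv hu hv => ?_⟩⟩
  · by_contra h
    simp only [decide_eq_true_eq, not_or] at h
    exact hI (hmem u h.1) (hmem v h.2) huv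
  · exact hK (of_decide_eq_true hu) (of_decide_eq_true hv) huv

instance : DecidableRel twoK2.Adj := fun u v => by unfold twoK2; infer_instance

theorem not_isSplit_cycleGraph_four : ¬ (cycleGraph 4).IsSplit :=
  fun h => absurd h.exists_bool (by decide)

theorem not_isSplit_cycleGraph_five : ¬ (cycleGraph 5).IsSplit :=
  fun h => absurd h.exists_bool (by decide)

theorem not_isSplit_twoK2 : ¬ twoK2.IsSplit :=
  fun h => absurd h.exists_bool (by decide)

theorem nonempty_cycleGraph_four_embedding {a b c d : V} (hab : G.Adj a b) (hbc : G.Adj b c)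
    (hcd : G.Adj c d) (hda : G.Adj d a) (hac : ¬ G.Adj a c) (hbd : ¬ G.Adj b d)
    (hac' : a ≠ c) (hbd' : b ≠ d) : Nonempty (cycleGraph 4 ↪g G) := by
  refine ⟨⟨⟨![a, b, c, d], fun i j h => ?_⟩, fun {i j} => ?_⟩⟩
  · fin_cases i <;> fin_cases j <;> first | rfl | (simp at h; subst h; simp_all [G.adj_comm])
  · change G.Adj (![a, b, c, d] i) (![a, b, c, d] j) ↔ _
    fin_cases i <;> fin_cases j <;> simp_all +decide [G.adj_comm]

theorem nonempty_cycleGraph_five_embedding {a b c d e : V} (hab : G.Adj a b) (hbc : G.Adj b c)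
    (hcd : G.Adj c d) (hde : G.Adj d e) (hea : G.Adj e a) (hac : ¬ G.Adj a c)
    (hbd : ¬ G.Adj b d) (hce : ¬ G.Adj c e) (hda : ¬ G.Adj d a) (heb : ¬ G.Adj e b) :
    Nonempty (cycleGraph 5 ↪g G) := by
  refine ⟨⟨⟨![a, b, c, d, e], fun i j h => ?_⟩, fun {i j} => ?_⟩⟩
  · fin_cases i <;> fin_cases j <;> first | rfl | (simp at h; subst h; simp_all [G.adj_comm])
  · change G.Adj (![a, b, c, d, e] i) (![a, b, c, d, e] j) ↔ _
    fin_cases i <;> fin_cases j <;> simp_all +decide [G.adj_comm]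

theorem nonempty_twoK2_embedding {a b c d : V} (hab : G.Adj a b) (hcd : G.Adj c d)
    (hac : ¬ G.Adj a c) (had : ¬ G.Adj a d) (hbc : ¬ G.Adj b c) (hbd : ¬ G.Adj b d) :
    Nonempty (twoK2 ↪g G) := by
  refine ⟨⟨⟨![a, b, c, d], fun i j h => ?_⟩, fun {i j} => ?_⟩⟩
  · fin_cases i <;> fin_cases j <;> first | rfl | (simp at h; subst h; simp_all [G.adj_comm])
  · change G.Adj (![a, b, c, d] i) (![a, b, c, d] j) ↔ _
    fin_cases i <;> fin_cases j <;> simp [G.adj_comm, twoK2, *]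

section Finite

variable [Fintype V]

theorem exists_adj_not_adj_of_degree_le [DecidableRel G.Adj] {x y z : V}
    (hdeg : G.degree x ≤ G.degree z) (hxy : G.Adj x y) (hzy : ¬ G.Adj z y) :
    ∃ w, G.Adj z w ∧ ¬ G.Adj x w := by
  by_contra! hsub
  have hssub : G.neighborFinset z ⊂ G.neighborFinset x :=
    Finset.ssubset_iff_of_subset (fun w => by simpa using hsub w) |>.mpr
      ⟨y, by simpa using hxy, by simpa using hzy⟩
  exact (Finset.card_lt_card hssub).not_ge (by simpa [card_neighborFinset_eq_degree] using hdeg)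

variable [DecidableEq V] {K : Finset V} {x y z : V}

theorem IsMaximumClique.exists_not_adj (hK : G.IsMaximumClique K) (hx : x ∉ K) :
    ∃ z ∈ K, ¬ G.Adj x z := by
  by_contra! hadj
  have hclique : G.IsClique (insert x K : Finset V) := by
    rw [Finset.coe_insert]
    exact hK.isClique.insert fun z hz _ => hadj z hz
  have := hK.maximum _ hclique
  rw [Finset.card_insert_of_notMem hx] at this
  omega

theorem IsMaximumClique.insert_erase (hK : G.IsMaximumClique K) (hx : x ∉ K) (hz : z ∈ K)
    (hxK : ∀ v ∈ K, v ≠ z → G.Adj x v) : G.IsMaximumClique (insert x (K.erase z)) := by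
  refine ⟨?_, fun L hL => ?_⟩
  · rw [Finset.coe_insert, Finset.coe_erase]
    exact (hK.isClique.subset Set.sdiff_subset).insert fun v hv _ => hxK v hv.1 hv.2
  · rw [Finset.card_insert_of_notMem (fun h => hx (Finset.mem_of_mem_erase h)),
      Finset.card_erase_add_one hz]
    exact hK.maximum L hL

variable [DecidableRel G.Adj]

theorem exists_isMaximumClique_forall_sum_degree_le :
    ∃ K : Finset V, G.IsMaximumClique K ∧
      ∀ L, G.IsMaximumClique L → ∑ v ∈ L, G.degree v ≤ ∑ v ∈ K, G.degree v := by
  obtain ⟨K₀, hK₀⟩ := G.exists_isNClique_cliqueNum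
  obtain ⟨K, hK, hmax⟩ := (G.cliqueFinset G.cliqueNum).exists_max_image
    (fun K => ∑ v ∈ K, G.degree v) ⟨K₀, mem_cliqueFinset_iff.mpr hK₀⟩
  rw [mem_cliqueFinset_iff] at hK
  refine ⟨K, ⟨hK.isClique, fun L hL => hK.card_eq ▸ hL.card_le_cliqueNum⟩, fun L hL => ?_⟩
  exact hmax L (mem_cliqueFinset_iff.mpr ⟨hL.isClique, maximumClique_card_eq_cliqueNum L hL⟩)

theorem IsMaximumClique.not_adj_of_forall_not_adj_imp (hK : G.IsMaximumClique K)
    (hdeg : ∀ L, G.IsMaximumClique L → ∑ v ∈ L, G.degree v ≤ ∑ v ∈ K, G.degree v)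
    (h4 : ¬ Nonempty (cycleGraph 4 ↪g G)) (h5 : ¬ Nonempty (cycleGraph 5 ↪g G))
    (h2 : ¬ Nonempty (twoK2 ↪g G)) (hx : x ∉ K) (hy : y ∉ K)
    (hsub : ∀ z ∈ K, ¬ G.Adj x z → ¬ G.Adj y z) : ¬ G.Adj x y := by
  intro hxy
  obtain ⟨z, hzK, hxz⟩ := hK.exists_not_adj hx
  have hyz : ¬ G.Adj y z := hsub z hzK hxz
  have hxK : ∀ v ∈ K, v ≠ z → G.Adj x v := fun v hvK hvz => by
    by_contra hxv
    exact h2 (nonempty_twoK2_embedding hxy (hK.isClique hvK hzK hvz) hxv hxz (hsub v hvK hxv) hyz)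
  -- Swapping `z` for `x` gives another maximum clique. Hence `y` misses some `v ≠ z` of `K`, and by
  -- the choice of `K`, `deg x ≤ deg z`, so `z` has a neighbour `w` that `x` misses.
  have hK' := hK.insert_erase hx hzK hxK
  obtain ⟨v, hvK', hyv⟩ := hK'.exists_not_adj (x := y) (by simp [hxy.ne', hy])
  obtain ⟨hvz, hvK⟩ : v ≠ z ∧ v ∈ K := by
    rcases Finset.mem_insert.mp hvK' with rfl | hv
    · exact absurd hxy.symm hyv
    · exact Finset.mem_erase.mp hv
  have hdeg_le : G.degree x ≤ G.degree z := by
    have := hdeg _ hK'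
    rw [Finset.sum_insert (fun h => hx (Finset.mem_of_mem_erase h)),
      ← Finset.add_sum_erase K _ hzK] at this
    omega
  obtain ⟨w, hzw, hxw⟩ := exists_adj_not_adj_of_degree_le hdeg_le hxy (fun h => hyz h.symm)
  have hxv := hxK v hvK hvz
  have hzv := hK.isClique hzK hvK (Ne.symm hvz)
  by_cases hyw : G.Adj y w
  · by_cases hvw : G.Adj v w
    · exact h4 (nonempty_cycleGraph_four_embedding hxy hyw hvw.symm hxv.symm hxw hyv
        (by rintro rfl; exact hxz hzw.symm) (fun h => hy (h ▸ hvK)))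
    · exact h5 (nonempty_cycleGraph_five_embedding hxy hyw hzw.symm hzv hxv.symm hxw hyz
        (fun h => hvw h.symm) (fun h => hxz h.symm) (fun h => hyv h.symm))
  · exact h2 (nonempty_twoK2_embedding hxy hzw hxz hxw hyz hyw)

theorem IsMaximumClique.not_adj_of_notMem (hK : G.IsMaximumClique K)
    (hdeg : ∀ L, G.IsMaximumClique L → ∑ v ∈ L, G.degree v ≤ ∑ v ∈ K, G.degree v)
    (h4 : ¬ Nonempty (cycleGraph 4 ↪g G)) (h5 : ¬ Nonempty (cycleGraph 5 ↪g G))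
    (h2 : ¬ Nonempty (twoK2 ↪g G)) (hx : x ∉ K) (hy : y ∉ K) : ¬ G.Adj x y := by
  by_cases hxy : ∀ z ∈ K, ¬ G.Adj x z → ¬ G.Adj y z
  · exact hK.not_adj_of_forall_not_adj_imp hdeg h4 h5 h2 hx hy hxy
  by_cases hyx : ∀ z ∈ K, ¬ G.Adj y z → ¬ G.Adj x z
  · exact fun h => hK.not_adj_of_forall_not_adj_imp hdeg h4 h5 h2 hy hx hyx h.symm
  push Not at hxy hyx
  obtain ⟨z₁, hz₁, hxz₁, hyz₁⟩ := hxy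
  obtain ⟨z₂, hz₂, hyz₂, hxz₂⟩ := hyx
  have hz₁₂ : G.Adj z₁ z₂ := hK.isClique hz₁ hz₂ (by rintro rfl; exact hyz₂ hyz₁)
  exact fun hxy => h4 (nonempty_cycleGraph_four_embedding hxy hyz₁ hz₁₂ hxz₂.symm hxz₁ hyz₂
    (fun h => hx (h ▸ hz₁)) (fun h => hy (h ▸ hz₂)))

end Finite

end SimpleGraph

/-- A graph is a split graph iff it has no induced `C₄`, `C₅`, or `2K₂`. -/
theorem split_iff_forbidden [Fintype V] (G : SimpleGraph V) :
    (∃ K I : Set V, SplitPartition G K I) ↔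
      ¬ Nonempty (cycleGraph 4 ↪g G) ∧ ¬ Nonempty (cycleGraph 5 ↪g G) ∧
        ¬ Nonempty (twoK2 ↪g G) := by
  constructor
  · intro (hG : G.IsSplit)
    exact ⟨fun ⟨f⟩ => not_isSplit_cycleGraph_four (hG.comap f),
      fun ⟨f⟩ => not_isSplit_cycleGraph_five (hG.comap f),
      fun ⟨f⟩ => not_isSplit_twoK2 (hG.comap f)⟩
  · rintro ⟨h4, h5, h2⟩
    classical
    obtain ⟨K, hK, hdeg⟩ := G.exists_isMaximumClique_forall_sum_degree_le
    exact ⟨K, (↑K)ᶜ, disjoint_compl_right, Set.union_compl_self _, hK.isClique,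
      fun _ hx _ hy => hK.not_adj_of_notMem hdeg h4 h5 h2 hx hy⟩
end

section
/- Every 2-connected split graph G with partition (K, I), K a maximum clique, in which every vertex of K has at most one neighbor in I (Δ^I ≤ 1), has a Hamiltonian cycle. -/
/-!
Every vertex `v ∈ I` has two distinct neighbours, which lie in the clique `K`, and since each
clique vertex has at most one neighbour in `I`, these pairs are disjoint for distinct `v`. Walking
through the blocks `left v, v, right v` for `v ∈ I`, followed by the remaining clique vertices one
at a time, gives a Hamiltonian cycle: the end of each block and the start of the next one
(cyclically) are distinct vertices of `K`, hence adjacent.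
-/

open SimpleGraph

variable {V : Type*}

def MaxClique (G : SimpleGraph V) (K : Set V) : Prop :=
  G.IsClique K ∧ ∀ K' : Set V, G.IsClique K' → K'.ncard ≤ K.ncard

def TwoConnected (G : SimpleGraph V) [Fintype V] : Prop :=
  3 ≤ Fintype.card V ∧ ∀ v : V, (G.induce (({v} : Set V)ᶜ)).Connected

def HasHamCycle (G : SimpleGraph V) : Prop :=
  letI := Classical.decEq V
  ∃ (a : V) (p : G.Walk a a), p.IsHamiltonianCycle

namespace List

variable {α : Type*} {R : α → α → Prop} {K : Set α} {B : List (List α)}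

theorem mem_of_mem_head?_flatten (hB : ∀ b ∈ B, ∀ x ∈ b.head?, x ∈ K) :
    ∀ x ∈ B.flatten.head?, x ∈ K := by
  intro x hx
  rw [head?_flatten] at hx
  obtain ⟨b, hb, hbx⟩ := exists_of_findSome?_eq_some hx
  exact hB b hb x hbx

theorem mem_of_mem_getLast?_flatten (hB : ∀ b ∈ B, ∀ x ∈ b.getLast?, x ∈ K) :
    ∀ x ∈ B.flatten.getLast?, x ∈ K := by
  intro x hx
  rw [getLast?_flatten] at hx
  obtain ⟨b, hb, hbx⟩ := exists_of_findSome?_eq_some hx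
  exact hB b (mem_reverse.1 hb) x hbx

theorem isChain_flatten_of_ends_mem (hK : K.Pairwise R) (hne : [] ∉ B)
    (hchain : ∀ b ∈ B, b.IsChain R) (hhead : ∀ b ∈ B, ∀ x ∈ b.head?, x ∈ K)
    (hlast : ∀ b ∈ B, ∀ x ∈ b.getLast?, x ∈ K) (hnd : B.flatten.Nodup) :
    B.flatten.IsChain R := by
  refine (isChain_flatten hne).2 ⟨hchain, Pairwise.isChain ?_⟩
  refine (nodup_flatten.1 hnd).2.imp_of_mem fun hb hc hbc x hx y hy => ?_
  have hxy : x ≠ y := fun h => hbc (mem_of_mem_getLast? hx) (h ▸ mem_of_mem_head? hy)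
  exact hK (hlast _ hb x hx) (hhead _ hc y hy) hxy

theorem Nodup.getLast?_ne_head? {l : List α} (hnd : l.Nodup) (hlen : 2 ≤ l.length) :
    ∀ x ∈ l.getLast?, ∀ y ∈ l.head?, x ≠ y := by
  obtain _ | ⟨a, _ | ⟨b, t⟩⟩ := l
  iterate 2 simp at hlen
  rintro x hx y ⟨⟩ rfl
  rw [getLast?_cons_cons, getLast?_eq_some_getLast (cons_ne_nil b t), Option.mem_some_iff] at hx
  exact (nodup_cons.1 hnd).1 (hx ▸ getLast_mem _)

end List

theorem exists_walk_support_eq_of_isChain {G : SimpleGraph V} {u v : V} (l : List V)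
    (hchain : l.IsChain G.Adj) (hne : l ≠ []) (hu : l.head hne = u) (hv : l.getLast hne = v) :
    ∃ p : G.Walk u v, p.support = l := by
  subst hu hv
  exact ⟨_, Walk.support_ofSupport hne hchain⟩

theorem hasHamCycle_of_isChain {G : SimpleGraph V} (l : List V) (hnd : l.Nodup)
    (hcover : ∀ v, v ∈ l) (hlen : 3 ≤ l.length) (hchain : l.IsChain G.Adj)
    (hclose : ∀ x ∈ l.getLast?, ∀ y ∈ l.head?, G.Adj x y) : HasHamCycle G := by
  classical
  obtain _ | ⟨a, t⟩ := l
  · simp at hlen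
  have hcycle : (a :: t ++ [a]).IsChain G.Adj :=
    hchain.append (.singleton a) (by simpa using hclose)
  obtain ⟨p, hsupp⟩ : ∃ p : G.Walk a a, p.support = a :: t ++ [a] :=
    exists_walk_support_eq_of_isChain _ hcycle (List.cons_ne_nil _ _) rfl (by simp)
  have hlenp : p.length = t.length + 1 := by
    simpa [hsupp] using p.length_support.symm
  have hnd' : (t ++ [a]).Nodup := List.nodup_append_comm.1 hnd
  refine ⟨a, p,
    Walk.isHamiltonianCycle_iff_isCycle_and_support_count_tail_eq_one.2 ⟨?_, fun v => ?_⟩⟩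
  · rw [Walk.isCycle_iff_isPath_tail_and_le_length]
    refine ⟨Walk.IsPath.mk' ?_, by simp at hlen; omega⟩
    rwa [Walk.support_tail_of_not_nil _ (by simp [← Walk.length_eq_zero_iff, hlenp]), hsupp]
  · rw [hsupp]
    exact List.count_eq_one_of_mem hnd' (by simpa [or_comm] using hcover v)

theorem TwoConnected.exists_adj_ne [Fintype V] {G : SimpleGraph V} (hG : TwoConnected G)
    {v w : V} (hvw : v ≠ w) : ∃ a, a ≠ w ∧ G.Adj v a := by
  obtain ⟨u, huv, huw⟩ := ENat.exists_ne_ne_of_three_le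
    (by simpa [ENat.card_eq_coe_fintype_card] using hG.1) v w
  have : Nontrivial (({w}ᶜ : Set V)) :=
    nontrivial_of_ne ⟨v, hvw⟩ ⟨u, huw⟩ (by simpa [Subtype.ext_iff] using huv.symm)
  obtain ⟨a, ha⟩ := (hG.2 w).preconnected.exists_adj_of_nontrivial ⟨v, hvw⟩
  exact ⟨a, a.2, ha⟩

theorem TwoConnected.exists_adj_adj [Fintype V] {G : SimpleGraph V} (hG : TwoConnected G)
    (v : V) : ∃ a b, a ≠ b ∧ G.Adj v a ∧ G.Adj v b := by
  have : Nontrivial V := Fintype.one_lt_card_iff_nontrivial.1 (by have := hG.1; omega)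
  obtain ⟨w, hw⟩ := exists_ne v
  obtain ⟨a, -, ha⟩ := hG.exists_adj_ne hw.symm
  obtain ⟨b, hba, hb⟩ := hG.exists_adj_ne ha.ne
  exact ⟨a, b, hba.symm, ha, hb⟩

theorem SplitPartition.mem_clique_of_notMem {G : SimpleGraph V} {K I : Set V}
    (h : SplitPartition G K I) {x : V} (hx : x ∉ I) : x ∈ K :=
  ((h.2.1 ▸ Set.mem_univ x : x ∈ K ∪ I)).resolve_right hx

theorem SplitPartition.mem_clique_of_adj {G : SimpleGraph V} {K I : Set V}
    (h : SplitPartition G K I) {v x : V} (hv : v ∈ I) (hadj : G.Adj v x) : x ∈ K :=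
  h.mem_clique_of_notMem fun hxI => h.2.2.2 hv hxI hadj

structure DisjointEars (G : SimpleGraph V) (I : Set V) where
  left : V → V
  right : V → V
  left_ne_right : ∀ v ∈ I, left v ≠ right v
  adj_left : ∀ v ∈ I, G.Adj v (left v)
  adj_right : ∀ v ∈ I, G.Adj v (right v)
  pairwiseDisjoint : I.PairwiseDisjoint fun v => ({left v, right v} : Set V)

namespace DisjointEars

variable {G : SimpleGraph V} {K I : Set V} (E : DisjointEars G I)

def ends : Set V := ⋃ v ∈ I, {E.left v, E.right v}

open Classical in
noncomputable def block (w : V) : List V :=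
  if w ∈ I then [E.left w, w, E.right w] else [w]

/- Given a split partition, the owners are the vertices of `I` and the clique vertices that are
not ear ends; every vertex lies in the block of exactly one owner. -/
open Classical in
noncomputable def owners [Fintype V] : List V :=
  (Finset.univ.filter (· ∉ E.ends)).toList

noncomputable def cycleList [Fintype V] : List V :=
  (E.owners.map E.block).flatten

theorem mem_block {w x : V} :
    x ∈ E.block w ↔ x = w ∨ w ∈ I ∧ x ∈ ({E.left w, E.right w} : Set V) := by
  unfold block
  split_ifs with hw <;> simp [hw]; tauto

theorem left_mem (hs : SplitPartition G K I) {v : V} (hv : v ∈ I) : E.left v ∈ K :=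
  hs.mem_clique_of_adj hv (E.adj_left v hv)

theorem right_mem (hs : SplitPartition G K I) {v : V} (hv : v ∈ I) : E.right v ∈ K :=
  hs.mem_clique_of_adj hv (E.adj_right v hv)

theorem ends_subset (hs : SplitPartition G K I) : E.ends ⊆ K := by
  simp only [ends, Set.iUnion_subset_iff, Set.insert_subset_iff, Set.singleton_subset_iff]
  exact fun v hv => ⟨E.left_mem hs hv, E.right_mem hs hv⟩

theorem notMem_ends (hs : SplitPartition G K I) {v : V} (hv : v ∈ I) : v ∉ E.ends :=
  fun h => Set.disjoint_left.1 hs.1 (E.ends_subset hs h) hv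

theorem eq_of_mem_block {w w' x : V} (hw : w ∉ E.ends) (hw' : w' ∉ E.ends)
    (hx : x ∈ E.block w) (hx' : x ∈ E.block w') : w = w' := by
  have hends : ∀ {v}, v ∈ I → x ∈ ({E.left v, E.right v} : Set V) → x ∈ E.ends :=
    fun hv hx => Set.mem_biUnion hv hx
  rcases E.mem_block.1 hx with rfl | ⟨hwI, hxw⟩ <;>
    rcases E.mem_block.1 hx' with rfl | ⟨hwI', hxw'⟩
  · rfl
  · exact absurd (hends hwI' hxw') hw
  · exact absurd (hends hwI hxw) hw'
  · exact E.pairwiseDisjoint.elim_set hwI hwI' x hxw hxw'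

theorem block_ne_nil (w : V) : E.block w ≠ [] := by
  unfold block
  split_ifs <;> simp

theorem nodup_block (hs : SplitPartition G K I) (w : V) : (E.block w).Nodup := by
  unfold block
  split_ifs with hw
  · have hK : ∀ {x}, x ∈ K → x ≠ w := fun hx h => Set.disjoint_left.1 hs.1 hx (h ▸ hw)
    simp [hK (E.left_mem hs hw), (hK (E.right_mem hs hw)).symm, E.left_ne_right w hw]
  · exact List.nodup_singleton w

theorem isChain_block (w : V) : (E.block w).IsChain G.Adj := by
  unfold block
  split_ifs with hw
  · simp [(E.adj_left w hw).symm, E.adj_right w hw]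
  · exact .singleton w

theorem mem_of_mem_head?_block (hs : SplitPartition G K I) (w : V) :
    ∀ x ∈ (E.block w).head?, x ∈ K := by
  unfold block
  split_ifs with hw
  · simpa using E.left_mem hs hw
  · simpa using hs.mem_clique_of_notMem hw

theorem mem_of_mem_getLast?_block (hs : SplitPartition G K I) (w : V) :
    ∀ x ∈ (E.block w).getLast?, x ∈ K := by
  unfold block
  split_ifs with hw
  · simpa using E.right_mem hs hw
  · simpa using hs.mem_clique_of_notMem hw

variable [Fintype V]

theorem mem_owners {w : V} : w ∈ E.owners ↔ w ∉ E.ends := by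
  simp [owners]

theorem mem_cycleList (hs : SplitPartition G K I) (x : V) : x ∈ E.cycleList := by
  simp only [cycleList, List.mem_flatten, List.mem_map, mem_owners]
  by_cases hx : x ∈ E.ends
  · obtain ⟨v, hv, hxv⟩ := Set.mem_iUnion₂.1 hx
    exact ⟨_, ⟨v, E.notMem_ends hs hv, rfl⟩, E.mem_block.2 (Or.inr ⟨hv, hxv⟩)⟩
  · exact ⟨_, ⟨x, hx, rfl⟩, E.mem_block.2 (Or.inl rfl)⟩

theorem nodup_cycleList (hs : SplitPartition G K I) : E.cycleList.Nodup := by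
  rw [cycleList, List.nodup_flatten, List.forall_mem_map, List.pairwise_map]
  have howners : E.owners.Nodup := Finset.nodup_toList _
  refine ⟨fun w _ => E.nodup_block hs w,
    howners.pairwise_of_forall_ne fun w hw w' hw' hne => ?_⟩
  rw [mem_owners] at hw hw'
  exact List.disjoint_left.2 fun _ hx hx' => hne (E.eq_of_mem_block hw hw' hx hx')

end DisjointEars

theorem DisjointEars.hasHamCycle [Fintype V] {G : SimpleGraph V} {K I : Set V}
    (E : DisjointEars G I) (hs : SplitPartition G K I) (hcard : 3 ≤ Fintype.card V) :
    HasHamCycle G := by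
  have hhead : ∀ b ∈ E.owners.map E.block, ∀ x ∈ b.head?, x ∈ K :=
    List.forall_mem_map.2 fun w _ => E.mem_of_mem_head?_block hs w
  have hlast : ∀ b ∈ E.owners.map E.block, ∀ x ∈ b.getLast?, x ∈ K :=
    List.forall_mem_map.2 fun w _ => E.mem_of_mem_getLast?_block hs w
  have hnd := E.nodup_cycleList hs
  have hlen : 3 ≤ E.cycleList.length := by
    have := Fintype.card_le_of_surjective _ (List.get_surjective_iff.2 (E.mem_cycleList hs))
    rw [Fintype.card_fin] at this
    omega
  refine hasHamCycle_of_isChain E.cycleList hnd (E.mem_cycleList hs) hlen ?_ ?_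
  · exact List.isChain_flatten_of_ends_mem hs.2.2.1
      (by simpa using fun w _ => (E.block_ne_nil w).symm)
      (List.forall_mem_map.2 fun w _ => E.isChain_block w) hhead hlast hnd
  · exact fun x hx y hy => hs.2.2.1 (List.mem_of_mem_getLast?_flatten hlast x hx)
      (List.mem_of_mem_head?_flatten hhead y hy) (hnd.getLast?_ne_head? (by omega) x hx y hy)

theorem SplitPartition.nonempty_disjointEars [Fintype V] {G : SimpleGraph V} {K I : Set V}
    (hs : SplitPartition G K I) (h2 : TwoConnected G)
    (hub : ∀ v ∈ K, (G.neighborSet v ∩ I).ncard ≤ 1) : Nonempty (DisjointEars G I) := by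
  choose a b hab ha hb using h2.exists_adj_adj
  refine ⟨⟨a, b, fun v _ => hab v, fun v _ => ha v, fun v _ => hb v, ?_⟩⟩
  intro v hv w hw hne
  refine Set.disjoint_left.2 fun x hxv hxw => hne ?_
  have hnbr : ∀ {u}, u ∈ I → x ∈ ({a u, b u} : Set V) → u ∈ G.neighborSet x ∩ I := by
    rintro u hu (rfl | rfl)
    exacts [⟨(ha u).symm, hu⟩, ⟨(hb u).symm, hu⟩]
  have hxK : x ∈ K := hs.mem_clique_of_adj hv (hnbr hv hxv).1.symm
  exact (Set.ncard_le_one (Set.toFinite _)).1 (hub x hxK) v (hnbr hv hxv) w (hnbr hw hxw)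

theorem twoConnected_deltaI_le_one_hamiltonian_general [Fintype V] (G : SimpleGraph V)
    (K I : Set V) (hsplit : SplitPartition G K I)
    (h2 : TwoConnected G)
    (hub : ∀ v ∈ K, (G.neighborSet v ∩ I).ncard ≤ 1) :
    HasHamCycle G := by
  obtain ⟨E⟩ := hsplit.nonempty_disjointEars h2 hub
  exact E.hasHamCycle hsplit h2.1

/-- A 2-connected split graph in which every clique vertex has at most one
neighbor in the independent set has a Hamiltonian cycle. -/
theorem twoConnected_deltaI_le_one_hamiltonian [Fintype V] (G : SimpleGraph V)
    (K I : Set V) (hsplit : SplitPartition G K I) (hmax : MaxClique G K)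
    (h2 : TwoConnected G)
    (hub : ∀ v ∈ K, (G.neighborSet v ∩ I).ncard ≤ 1) :
    HasHamCycle G :=
  twoConnected_deltaI_le_one_hamiltonian_general G K I hsplit h2 hub
end

section
/- Let G be a K_{1,4}-free split graph with partition (K, I), K a maximum clique, and suppose v ∈ K has exactly 3 neighbors in I; let U = N(v) ∩ I. Then every vertex of K has a neighbor in U, i.e., N(U) ⊇ K. -/
open SimpleGraph

variable {V : Type*}

/-- `G` has no induced copy of the star `K_{1,n}` (center plus `n` pairwise
nonadjacent leaves). -/
def StarFree (G : SimpleGraph V) (n : ℕ) : Prop :=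
  ¬ ∃ (c : V) (L : Finset V), L.card = n ∧ c ∉ L ∧ (∀ l ∈ L, G.Adj c l) ∧
      (∀ l ∈ L, ∀ m ∈ L, l ≠ m → ¬ G.Adj l m)

/-! If some `w ∈ K` had no neighbour in `U`, then `v` together with the leaves `U ∪ {w}` would be an
induced `K_{1,4}`: `w` is adjacent to `v` because `K` is a clique, and `U ∪ {w}` is independent because
`U ⊆ I` and `w` misses `U`. -/

theorem IndepOn.isIndepSet_of_subset {G : SimpleGraph V} {I U : Set V} (hI : IndepOn G I)
    (hU : U ⊆ I) : G.IsIndepSet U :=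
  fun _ hu _ hu' _ => hI (hU hu) (hU hu')

theorem StarFree.exists_adj_of_isIndepSet {G : SimpleGraph V} {n : ℕ}
    (hfree : StarFree G (n + 1)) {c w : V} {L : Finset V} (hcard : L.card = n)
    (hcL : ∀ l ∈ L, G.Adj c l) (hL : G.IsIndepSet (L : Set V)) (hcw : G.Adj c w)
    (hwL : w ∉ L) : ∃ u ∈ L, G.Adj w u := by
  classical
  by_contra! hw
  have hind : G.IsIndepSet (insert w L : Finset V) := by
    rw [Finset.coe_insert]
    exact hL.insert fun u hu _ => ⟨hw u hu, fun h => hw u hu h.symm⟩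
  refine hfree ⟨c, insert w L, by rw [Finset.card_insert_of_notMem hwL, hcard], ?_, ?_,
    fun l hl m hm => hind hl hm⟩
  · simp only [Finset.mem_insert, not_or]
    exact ⟨hcw.ne, fun hc => G.loopless.irrefl c (hcL c hc)⟩
  · simpa only [Finset.forall_mem_insert] using ⟨hcw, hcL⟩

theorem k14free_claimA_general (G : SimpleGraph V) (K I : Set V)
    (hsplit : SplitPartition G K I)
    (hfree : StarFree G 4) (v : V) (hv : v ∈ K)
    (hdeg : (G.neighborSet v ∩ I).ncard = 3) :
    ∀ w ∈ K, ∃ u ∈ G.neighborSet v ∩ I, G.Adj w u := by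
  obtain ⟨hdisj, -, hclique, hindep⟩ := hsplit
  have hfin : (G.neighborSet v ∩ I).Finite := Set.finite_of_ncard_ne_zero (by omega)
  intro w hw
  obtain rfl | hvw := eq_or_ne v w
  · obtain ⟨u, hu⟩ := Set.nonempty_of_ncard_ne_zero (s := G.neighborSet v ∩ I) (by omega)
    exact ⟨u, hu, hu.1⟩
  have hwU : w ∉ hfin.toFinset := fun h =>
    Set.disjoint_left.mp hdisj hw (hfin.mem_toFinset.mp h).2
  obtain ⟨u, hu, hwu⟩ := hfree.exists_adj_of_isIndepSet
    (by rwa [← Set.ncard_eq_toFinset_card _ hfin]) (fun l hl => (hfin.mem_toFinset.mp hl).1)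
    (by simpa using hindep.isIndepSet_of_subset Set.inter_subset_right)
    (hclique hv hw hvw) hwU
  exact ⟨u, hfin.mem_toFinset.mp hu, hwu⟩

/-- If `v ∈ K` has exactly 3 neighbors in `I` in a `K_{1,4}`-free split graph,
then every vertex of `K` has a neighbor in `U = N(v) ∩ I`. -/
theorem k14free_claimA [Fintype V] (G : SimpleGraph V) (K I : Set V)
    (hsplit : SplitPartition G K I) (hmax : MaxClique G K)
    (hfree : StarFree G 4) (v : V) (hv : v ∈ K)
    (hdeg : (G.neighborSet v ∩ I).ncard = 3) :
    ∀ w ∈ K, ∃ u ∈ G.neighborSet v ∩ I, G.Adj w u :=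
  k14free_claimA_general G K I hsplit hfree v hv hdeg
end

section
/- Let G be a K_{1,4}-free split graph with partition (K, I), K a maximum clique, and let v ∈ K with |N(v) ∩ I| = 3. Then in the split graph H = G − (N(v) ∩ I), every vertex of K has at most 2 neighbors in the remaining independent set, i.e., Δ^I_H ≤ 2. -/
open SimpleGraph

variable {V : Type*}

variable {G : SimpleGraph V}

theorem IndepOn.mono {I J : Set V} (hI : IndepOn G I) (hJI : J ⊆ I) : IndepOn G J :=
  fun _ hu _ hv => hI (hJI hu) (hJI hv)

theorem IndepOn.insert {I : Set V} {v : V} (hI : IndepOn G I) (hv : ∀ u ∈ I, ¬ G.Adj v u) :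
    IndepOn G (insert v I) := by
  rintro a (rfl | ha) b (rfl | hb)
  · exact G.irrefl
  · exact hv b hb
  · exact fun hab => hv a ha hab.symm
  · exact hI ha hb

theorem StarFree.encard_lt {n : ℕ} (hfree : StarFree G n) {c : V} {L : Set V} (hcL : c ∉ L)
    (hLc : L ⊆ G.neighborSet c) (hL : IndepOn G L) : L.encard < n := by
  by_contra! hnL
  obtain ⟨t, htL, htn⟩ := Set.exists_subset_encard_eq hnL
  have ht : t.Finite := Set.finite_of_encard_eq_coe htn
  refine hfree ⟨c, ht.toFinset, ?_, ?_, ?_, ?_⟩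
  · exact_mod_cast ht.encard_eq_coe_toFinset_card.symm.trans htn
  · simpa using fun hct => hcL (htL hct)
  · simpa using fun l hl => hLc (htL hl)
  · simpa using fun l hl m hm _ => hL (htL hl) (htL hm)

theorem k14free_claimB_general (G : SimpleGraph V) (K I : Set V)
    (hsplit : SplitPartition G K I)
    (hfree : StarFree G 4) (v : V) (hv : v ∈ K) :
    ∀ w ∈ K, (G.neighborSet w ∩ (I \ G.neighborSet v)).ncard ≤ 2 := by
  obtain ⟨hKI, -, hK, hI⟩ := hsplit
  intro w hw
  set S := G.neighborSet w ∩ (I \ G.neighborSet v)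
  rcases eq_or_ne w v with rfl | hwv
  · simp [S]
  have hvS : v ∉ S := fun h => hKI.notMem_of_mem_left hv h.2.1
  -- `v` together with `S` are the leaves of a star centred at `w`
  have hstar : (insert v S).encard < 4 := by
    refine hfree.encard_lt (c := w) ?_ ?_ ((hI.mono fun _ h => h.2.1).insert fun u hu => hu.2.2)
    · rintro (rfl | hwS)
      · exact hwv rfl
      · exact hKI.notMem_of_mem_left hw hwS.2.1
    · exact Set.insert_subset (hK hw hv hwv) Set.inter_subset_left
  rw [Set.encard_insert_of_notMem hvS, show (4 : ℕ∞) = 3 + 1 from rfl,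
    ENat.add_lt_add_iff_right ENat.one_ne_top] at hstar
  exact ENat.toNat_le_of_le_natCast (Order.le_of_lt_add_one hstar)

/-- If `v ∈ K` has exactly 3 neighbors in `I` in a `K_{1,4}`-free split graph,
then in `H = G - (N(v) ∩ I)` every vertex of `K` has at most 2 neighbors in the
remaining independent set. -/
theorem k14free_claimB [Fintype V] (G : SimpleGraph V) (K I : Set V)
    (hsplit : SplitPartition G K I) (hmax : MaxClique G K)
    (hfree : StarFree G 4) (v : V) (hv : v ∈ K)
    (hdeg : (G.neighborSet v ∩ I).ncard = 3) :
    ∀ w ∈ K, (G.neighborSet w ∩ (I \ G.neighborSet v)).ncard ≤ 2 :=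
  k14free_claimB_general G K I hsplit hfree v hv
end

section
/- Let G be a K_{1,4}-free split graph with maximum clique K and independent set I, with a vertex v ∈ K satisfying N^I(v) = {v_1, v_2, v_3}. If P = (w_1,...,w_j; x_1,...,x_{j-1}) with j ≥ 6 is an alternating path in G − N^I(v) with w_i ∈ K and x_i ∈ I, then there is a single vertex v_1 ∈ N^I(v) adjacent to all of w_2, ..., w_{j-1}. -/
open SimpleGraph

variable {V : Type*}

/-- `(w, x)` describes an alternating path `w 0, x 0, w 1, x 1, …, w (j-1)`
in `G - A` with the `j` vertices `w i` in `K` and the `j - 1` vertices `x i`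
in `I`, all distinct and avoiding `A`. -/
def IsAltPath (G : SimpleGraph V) (K I A : Set V) (j : ℕ) (w x : ℕ → V) : Prop :=
  2 ≤ j ∧
  (∀ i < j, w i ∈ K ∧ w i ∉ A) ∧
  (∀ i < j - 1, x i ∈ I ∧ x i ∉ A) ∧
  (∀ i < j, ∀ k < j, w i = w k → i = k) ∧
  (∀ i < j - 1, ∀ k < j - 1, x i = x k → i = k) ∧
  (∀ i < j, ∀ k < j - 1, w i ≠ x k) ∧
  (∀ i < j - 1, G.Adj (w i) (x i) ∧ G.Adj (w (i + 1)) (x i))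

/-- The vertex set of the alternating path `(w, x)` with `j` clique vertices. -/
def altPathVerts (j : ℕ) (w x : ℕ → V) : Set V :=
  {u | ∃ i < j, u = w i} ∪ {u | ∃ i < j - 1, u = x i}


lemma star_aux {V : Type*} (G : SimpleGraph V) (hfree : StarFree G 4)
    (u a b c d : V)
    (ha : G.Adj u a) (hb : G.Adj u b) (hc : G.Adj u c) (hd : G.Adj u d)
    (hab : a ≠ b) (hac : a ≠ c) (had : a ≠ d) (hbc : b ≠ c) (hbd : b ≠ d) (hcd : c ≠ d)
    (nab : ¬ G.Adj a b) (nac : ¬ G.Adj a c) (nad : ¬ G.Adj a d)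
    (nbc : ¬ G.Adj b c) (nbd : ¬ G.Adj b d) (ncd : ¬ G.Adj c d) : False := by
  classical
  apply hfree
  refine ⟨u, {a, b, c, d}, ?_, ?_, ?_, ?_⟩
  · rw [Finset.card_insert_of_notMem (by simp [hab, hac, had]),
      Finset.card_insert_of_notMem (by simp [hbc, hbd]),
      Finset.card_insert_of_notMem (by simp [hcd]), Finset.card_singleton]
  · simp only [Finset.mem_insert, Finset.mem_singleton]
    push_neg
    exact ⟨ha.ne, hb.ne, hc.ne, hd.ne⟩
  · intro l hl
    simp only [Finset.mem_insert, Finset.mem_singleton] at hl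
    rcases hl with rfl | rfl | rfl | rfl <;> assumption
  · intro l hl m hm hne
    simp only [Finset.mem_insert, Finset.mem_singleton] at hl hm
    rcases hl with rfl | rfl | rfl | rfl <;> rcases hm with rfl | rfl | rfl | rfl <;>
      first
        | exact absurd rfl hne
        | assumption
        | exact fun h => nab h.symm
        | exact fun h => nac h.symm
        | exact fun h => nad h.symm
        | exact fun h => nbc h.symm
        | exact fun h => nbd h.symm
        | exact fun h => ncd h.symm

/-- Claim: for an alternating path on at least 11 vertices (`j ≥ 6` clique
vertices) in `G - N^I(v)`, some single `v₁ ∈ N^I(v)` is adjacent to all the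
internal clique vertices `w₂, …, w_{j-1}` of the path. -/
theorem universal_vertex_for_long_path [Fintype V] (G : SimpleGraph V)
    (K I : Set V) (hsplit : SplitPartition G K I) (hmax : MaxClique G K)
    (hfree : StarFree G 4) (v : V) (hv : v ∈ K)
    (hdeg : (G.neighborSet v ∩ I).ncard = 3)
    (j : ℕ) (hj : 6 ≤ j) (w x : ℕ → V)
    (hP : IsAltPath G K I (G.neighborSet v ∩ I) j w x) :
    ∃ v₁ ∈ G.neighborSet v ∩ I, ∀ i, 1 ≤ i → i < j - 1 → G.Adj v₁ (w i) := by
  classical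
  obtain ⟨hdisj, -, hclK, hindep⟩ := hsplit
  obtain ⟨hj2, hw, hx, hwinj, hxinj, hwx, hadj⟩ := hP
  set A : Set V := G.neighborSet v ∩ I with hA
  -- basic facts
  have hAI : ∀ a ∈ A, a ∈ I := fun a ha => ha.2
  have hAv : ∀ a ∈ A, G.Adj v a := fun a ha => ha.1
  have hIK : ∀ a ∈ I, a ∉ K := fun a ha hK => Set.disjoint_left.mp hdisj hK ha
  -- w i ≠ v for 1 ≤ i < j
  have hwnv : ∀ i, 1 ≤ i → i < j → w i ≠ v := by
    intro i h1 hij heq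
    have hlt : i - 1 < j - 1 := by omega
    have h2 := (hadj (i - 1) hlt).2
    have hii : i - 1 + 1 = i := by omega
    rw [hii, heq] at h2
    exact (hx (i - 1) hlt).2 ⟨h2, (hx (i - 1) hlt).1⟩
  -- every internal w i has a neighbor in A
  have hex : ∀ i, 1 ≤ i → i < j - 1 → ∃ c ∈ A, G.Adj (w i) c := by
    intro i h1 hij
    by_contra hcon
    push_neg at hcon
    obtain ⟨a, b, c, hab, hac, hbc, hA3⟩ := Set.ncard_eq_three.mp hdeg
    have haA : a ∈ A := by rw [hA3]; simp
    have hbA : b ∈ A := by rw [hA3]; simp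
    have hcA : c ∈ A := by rw [hA3]; simp
    have hwiK : w i ∈ K := (hw i (by omega)).1
    have hne : v ≠ w i := (hwnv i h1 (by omega)).symm
    exact star_aux G hfree v a b c (w i)
      (hAv a haA) (hAv b hbA) (hAv c hcA) (hclK hv hwiK hne)
      hab hac (fun h => hIK a (hAI a haA) (h ▸ hwiK)) hbc
      (fun h => hIK b (hAI b hbA) (h ▸ hwiK))
      (fun h => hIK c (hAI c hcA) (h ▸ hwiK))
      (hindep (hAI a haA) (hAI b hbA)) (hindep (hAI a haA) (hAI c hcA))
      (fun h => hcon a haA h.symm)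
      (hindep (hAI b hbA) (hAI c hcA))
      (fun h => hcon b hbA h.symm)
      (fun h => hcon c hcA h.symm)
  -- propagation lemma
  have hprop : ∀ c ∈ A, ∀ i, 1 ≤ i → i < j - 1 → ∀ i', 1 ≤ i' → i' < j - 1 →
      (i' + 1 < i ∨ i + 1 < i') → G.Adj (w i) c → G.Adj (w i') c := by
    intro c hcA i h1i hij i' h1i' hi'j hfar hadjic
    by_contra hnc
    have hii : i - 1 + 1 = i := by omega
    have hlt1 : i - 1 < j - 1 := by omega
    have key : G.Adj (w i') (x (i - 1)) ∨ G.Adj (w i') (x i) := by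
      by_contra hno
      push_neg at hno
      have hwiK : w i ∈ K := (hw i (by omega)).1
      have hwi'K : w i' ∈ K := (hw i' (by omega)).1
      have hnewi : w i ≠ w i' := fun h => by
        have := hwinj i (by omega) i' (by omega) h; omega
      have adj1 : G.Adj (w i) (x (i - 1)) := by
        have := (hadj (i - 1) hlt1).2; rwa [hii] at this
      exact star_aux G hfree (w i) (x (i - 1)) (x i) c (w i')
        adj1 (hadj i hij).1 hadjic (hclK hwiK hwi'K hnewi)
        (fun h => by have := hxinj (i - 1) hlt1 i hij h; omega)
        (fun h => (hx (i - 1) hlt1).2 (h ▸ hcA))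
        (fun h => hwx i' (by omega) (i - 1) hlt1 h.symm)
        (fun h => (hx i hij).2 (h ▸ hcA))
        (fun h => hwx i' (by omega) i hij h.symm)
        (fun h => hIK c (hAI c hcA) (h ▸ hwi'K))
        (hindep (hx (i - 1) hlt1).1 (hx i hij).1)
        (hindep (hx (i - 1) hlt1).1 (hAI c hcA))
        (fun h => hno.1 h.symm)
        (hindep (hx i hij).1 (hAI c hcA))
        (fun h => hno.2 h.symm)
        (fun h => hnc h.symm)
    obtain ⟨c', hc'A, hc'adj⟩ := hex i' h1i' hi'j
    have hii' : i' - 1 + 1 = i' := by omega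
    have hlt1' : i' - 1 < j - 1 := by omega
    have adj1' : G.Adj (w i') (x (i' - 1)) := by
      have := (hadj (i' - 1) hlt1').2; rwa [hii'] at this
    rcases key with h | h
    · exact star_aux G hfree (w i') (x (i' - 1)) (x i') c' (x (i - 1))
        adj1' (hadj i' hi'j).1 hc'adj h
        (fun hh => by have := hxinj (i' - 1) hlt1' i' hi'j hh; omega)
        (fun hh => (hx (i' - 1) hlt1').2 (hh ▸ hc'A))
        (fun hh => by have := hxinj (i' - 1) hlt1' (i - 1) hlt1 hh; omega)
        (fun hh => (hx i' hi'j).2 (hh ▸ hc'A))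
        (fun hh => by have := hxinj i' hi'j (i - 1) hlt1 hh; omega)
        (fun hh => (hx (i - 1) hlt1).2 (hh.symm ▸ hc'A))
        (hindep (hx (i' - 1) hlt1').1 (hx i' hi'j).1)
        (hindep (hx (i' - 1) hlt1').1 (hAI c' hc'A))
        (hindep (hx (i' - 1) hlt1').1 (hx (i - 1) hlt1).1)
        (hindep (hx i' hi'j).1 (hAI c' hc'A))
        (hindep (hx i' hi'j).1 (hx (i - 1) hlt1).1)
        (hindep (hAI c' hc'A) (hx (i - 1) hlt1).1)
    · exact star_aux G hfree (w i') (x (i' - 1)) (x i') c' (x i)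
        adj1' (hadj i' hi'j).1 hc'adj h
        (fun hh => by have := hxinj (i' - 1) hlt1' i' hi'j hh; omega)
        (fun hh => (hx (i' - 1) hlt1').2 (hh ▸ hc'A))
        (fun hh => by have := hxinj (i' - 1) hlt1' i hij hh; omega)
        (fun hh => (hx i' hi'j).2 (hh ▸ hc'A))
        (fun hh => by have := hxinj i' hi'j i hij hh; omega)
        (fun hh => (hx i hij).2 (hh.symm ▸ hc'A))
        (hindep (hx (i' - 1) hlt1').1 (hx i' hi'j).1)
        (hindep (hx (i' - 1) hlt1').1 (hAI c' hc'A))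
        (hindep (hx (i' - 1) hlt1').1 (hx i hij).1)
        (hindep (hx i' hi'j).1 (hAI c' hc'A))
        (hindep (hx i' hi'j).1 (hx i hij).1)
        (hindep (hAI c' hc'A) (hx i hij).1)
  -- assemble
  obtain ⟨c, hcA, hc3⟩ := hex 3 (by omega) (by omega)
  have h1 : G.Adj (w 1) c := hprop c hcA 3 (by omega) (by omega) 1 (by omega) (by omega) (Or.inl (by omega)) hc3
  have h4 : G.Adj (w 4) c := hprop c hcA 1 (by omega) (by omega) 4 (by omega) (by omega) (Or.inr (by omega)) h1
  have h2 : G.Adj (w 2) c := hprop c hcA 4 (by omega) (by omega) 2 (by omega) (by omega) (Or.inl (by omega)) h4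
  refine ⟨c, hcA, fun i h1i hij => ?_⟩
  have : G.Adj (w i) c := by
    rcases Nat.lt_or_ge i 5 with h5 | h5
    · interval_cases i
      · exact h1
      · exact h2
      · exact hc3
      · exact h4
    · exact hprop c hcA 3 (by omega) (by omega) i (by omega) hij (Or.inr (by omega)) hc3
  exact this.symm
end

section
/- Let G be a 2-connected K_{1,4}-free split graph with maximum clique K, independent set I, |K| ≥ |I| ≥ 8, Δ^I = 3, with v ∈ K having |N(v)∩I| = 3, and suppose G has no short cycles. Then the collection 𝕮 of maximal alternating paths in G − N^I(v) (as given by the Δ^I ≤ 2 construction) contains no path on 13 or more vertices. -/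
open SimpleGraph

variable {V : Type*}

/-- The bipartite subgraph `H` of `G` on `V_a = {u ∈ I : deg u = 2}` and
`V_b = N(V_a)`: its edges are exactly the edges of `G` incident to a degree-2
vertex of `I`. -/
def shortSub (G : SimpleGraph V) (I : Set V) : SimpleGraph V where
  Adj x y := G.Adj x y ∧
    ((x ∈ I ∧ (G.neighborSet x).ncard = 2) ∨ (y ∈ I ∧ (G.neighborSet y).ncard = 2))
  symm := ⟨fun x y h => ⟨h.1.symm, h.2.symm⟩⟩
  loopless := ⟨fun x h => G.irrefl h.1⟩

/-- `G` has a short cycle: an induced cycle in the bipartite subgraph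
`shortSub G I` missing at least one vertex of `K`. -/
def HasShortCycle (G : SimpleGraph V) (K I : Set V) : Prop :=
  ∃ (n : ℕ) (f : cycleGraph n ↪g shortSub G I), 3 ≤ n ∧ ∃ k ∈ K, k ∉ Set.range ⇑f

/-!
Every clique vertex `p ≠ v` sees one of the three vertices of `A = N(v) ∩ I`, for otherwise
`v` would be the centre of a `K_{1,4}`. So, as `Δ^I ≤ 3`, each interior clique vertex
`w (i+1)` of the path has `I`-neighbourhood exactly `{x i, x (i+1), c_i}` with `c_i ∈ A`. The
star at `w (i+1)` with these leaves forces every other clique vertex to see one of them; for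
`w (k+1)` with `k ≥ i + 2` this means `c_i = c_k`, so `w 1, w 3, w 5` share a neighbour `a ∈ A`.
By maximality of `K` some `u ∈ K` misses `a`; the stars at `w 1, w 3, w 5` then give `u` a
neighbour among `x 0, x 1`, among `x 2, x 3` and among `x 4, x 5`, and `u` also sees some
`a' ∈ A`: four `I`-neighbours.
-/

theorem Set.eq_triple_of_ncard_le_three {α : Type*} {s : Set α} {a b c : α} (hs : s.Finite)
    (hcard : s.ncard ≤ 3) (ha : a ∈ s) (hb : b ∈ s) (hc : c ∈ s)
    (hab : a ≠ b) (hac : a ≠ c) (hbc : b ≠ c) : s = {a, b, c} := by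
  refine (Set.eq_of_subset_of_ncard_le ?_ ?_ hs).symm
  · simp [Set.insert_subset_iff, ha, hb, hc]
  · rwa [Set.ncard_eq_three.mpr ⟨a, b, c, hab, hac, hbc, rfl⟩]

theorem MaxClique.exists_not_adj [Finite V] {G : SimpleGraph V} {K : Set V} (hK : MaxClique G K)
    {a : V} (ha : a ∉ K) : ∃ u ∈ K, ¬ G.Adj u a := by
  by_contra! hall
  have hclique : G.IsClique (insert a K) :=
    hK.1.insert fun u hu _ => (hall u hu).symm
  have := hK.2 _ hclique
  rw [Set.ncard_insert_of_notMem ha] at this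
  omega

theorem StarFree.exists_adj_of_ncard_eq_three {G : SimpleGraph V} {I : Set V}
    (hfree : StarFree G 4) (hI : IndepOn G I) {c p : V}
    (hc : (G.neighborSet c ∩ I).ncard = 3) (hcp : G.Adj c p) (hp : p ∉ I) :
    ∃ y ∈ G.neighborSet c ∩ I, G.Adj p y := by
  classical
  by_contra! hpY
  have hfin : (G.neighborSet c ∩ I).Finite := Set.finite_of_ncard_pos (by omega)
  set Y := hfin.toFinset
  have hpY' : p ∉ Y := fun h => hp (hfin.mem_toFinset.mp h).2
  refine hfree ⟨c, insert p Y, ?_, ?_, ?_, ?_⟩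
  · rw [Finset.card_insert_of_notMem hpY', ← Set.ncard_eq_toFinset_card _ hfin, hc]
  · simp [Y, hcp.ne]
  · simpa [Y, hcp] using fun y hy _ => hy
  · simp only [Finset.mem_insert, Set.Finite.mem_toFinset, Y]
    rintro l (rfl | hl) m (rfl | hm) hlm
    · exact absurd rfl hlm
    · exact hpY m hm
    · exact fun h => hpY l hl h.symm
    · exact hI hl.2 hm.2

namespace IsAltPath

variable {G : SimpleGraph V} {K I A : Set V} {j : ℕ} {w x : ℕ → V} {i k l : ℕ}

theorem w_mem (hP : IsAltPath G K I A j w x) (hi : i < j) : w i ∈ K :=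
  (hP.2.1 i hi).1

theorem x_mem (hP : IsAltPath G K I A j w x) (hi : i < j - 1) : x i ∈ I :=
  (hP.2.2.1 i hi).1

theorem x_notMem (hP : IsAltPath G K I A j w x) (hi : i < j - 1) : x i ∉ A :=
  (hP.2.2.1 i hi).2

theorem w_ne (hP : IsAltPath G K I A j w x) (hi : i < j) (hk : k < j) (hik : i ≠ k) :
    w i ≠ w k :=
  fun h => hik (hP.2.2.2.1 i hi k hk h)

theorem x_inj (hP : IsAltPath G K I A j w x) (hi : i < j - 1) (hk : k < j - 1) :
    x i = x k → i = k :=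
  hP.2.2.2.2.1 i hi k hk

theorem x_ne (hP : IsAltPath G K I A j w x) (hi : i < j - 1) (hk : k < j - 1) (hik : i ≠ k) :
    x i ≠ x k :=
  fun h => hik (hP.x_inj hi hk h)

theorem adj_w_x (hP : IsAltPath G K I A j w x) (hi : i < j - 1) : G.Adj (w i) (x i) :=
  (hP.2.2.2.2.2.2 i hi).1

theorem adj_w_succ_x (hP : IsAltPath G K I A j w x) (hi : i < j - 1) :
    G.Adj (w (i + 1)) (x i) :=
  (hP.2.2.2.2.2.2 i hi).2

theorem w_succ_ne {v : V} (hP : IsAltPath G K I (G.neighborSet v ∩ I) j w x) (hi : i < j - 1) :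
    w (i + 1) ≠ v := by
  rintro rfl
  exact hP.x_notMem hi ⟨hP.adj_w_succ_x hi, hP.x_mem hi⟩

theorem eq_or_eq_of_x_mem (hP : IsAltPath G K I A j w x) (hl : l < j - 1) (hi : i < j - 1)
    (hk : k < j - 1) {d : V} (hd : d ∈ A) (h : x l ∈ ({x i, x k, d} : Set V)) : l = i ∨ l = k := by
  rcases h with h | h | h
  · exact .inl (hP.x_inj hl hi h)
  · exact .inr (hP.x_inj hl hk h)
  · exact absurd (h ▸ hd) (hP.x_notMem hl)

theorem pairwise_ne_of_interior (hP : IsAltPath G K I A j w x) (hi : i + 2 < j) {c : V}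
    (hc : c ∈ A) : x i ≠ x (i + 1) ∧ x i ≠ c ∧ x (i + 1) ≠ c :=
  ⟨hP.x_ne (by omega) (by omega) (by omega),
    fun h => hP.x_notMem (i := i) (by omega) (h ▸ hc),
    fun h => hP.x_notMem (i := i + 1) (by omega) (h ▸ hc)⟩

theorem neighborSet_inter_eq [Finite V] (hP : IsAltPath G K I A j w x)
    (hub : (G.neighborSet (w (i + 1)) ∩ I).ncard ≤ 3) (hA : A ⊆ I) (hi : i + 2 < j)
    {c : V} (hc : c ∈ A) (hwc : G.Adj (w (i + 1)) c) :
    G.neighborSet (w (i + 1)) ∩ I = {x i, x (i + 1), c} :=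
  have ⟨h₁₂, h₁₃, h₂₃⟩ := hP.pairwise_ne_of_interior hi hc
  Set.eq_triple_of_ncard_le_three (Set.toFinite _) hub
    ⟨hP.adj_w_succ_x (by omega), hP.x_mem (by omega)⟩
    ⟨hP.adj_w_x (by omega), hP.x_mem (by omega)⟩ ⟨hwc, hA hc⟩ h₁₂ h₁₃ h₂₃

theorem adj_of_adj_interior [Finite V] (hP : IsAltPath G K I A j w x) (hfree : StarFree G 4)
    (hI : IndepOn G I) (hub : (G.neighborSet (w (i + 1)) ∩ I).ncard ≤ 3) (hA : A ⊆ I)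
    (hi : i + 2 < j) {c p : V} (hc : c ∈ A) (hwc : G.Adj (w (i + 1)) c)
    (hwp : G.Adj (w (i + 1)) p) (hp : p ∉ I) :
    G.Adj p (x i) ∨ G.Adj p (x (i + 1)) ∨ G.Adj p c := by
  obtain ⟨h₁₂, h₁₃, h₂₃⟩ := hP.pairwise_ne_of_interior hi hc
  have hN := hP.neighborSet_inter_eq hub hA hi hc hwc
  obtain ⟨y, hy, hpy⟩ := hfree.exists_adj_of_ncard_eq_three hI
    (Set.ncard_eq_three.mpr ⟨_, _, _, h₁₂, h₁₃, h₂₃, hN⟩) hwp hp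
  rw [hN] at hy
  rcases hy with rfl | rfl | rfl <;> simp [hpy]

theorem eq_of_adj_interior [Finite V] (hP : IsAltPath G K I A j w x) (hfree : StarFree G 4)
    (hK : G.IsClique K) (hI : IndepOn G I) (hKI : Disjoint K I)
    (hub : ∀ u ∈ K, (G.neighborSet u ∩ I).ncard ≤ 3) (hA : A ⊆ I) (hik : i + 2 ≤ k)
    (hk : k + 2 < j) {c d : V} (hc : c ∈ A) (hwc : G.Adj (w (i + 1)) c) (hd : d ∈ A)
    (hwd : G.Adj (w (k + 1)) d) : c = d := by
  have hwi := hP.w_mem (i := i + 1) (by omega)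
  have hwk := hP.w_mem (i := k + 1) (by omega)
  have hN := hP.neighborSet_inter_eq (hub _ hwk) hA hk hd hwd
  rcases hP.adj_of_adj_interior hfree hI (hub _ hwi) hA (by omega) hc hwc
    (hK hwi hwk (hP.w_ne (by omega) (by omega) (by omega))) (Set.disjoint_left.mp hKI hwk)
    with h | h | h
  · have := hP.eq_or_eq_of_x_mem (l := i) (i := k) (k := k + 1) (by omega) (by omega) (by omega) hd
      (by rw [← hN]; exact ⟨h, hP.x_mem (by omega)⟩)
    omega
  · have := hP.eq_or_eq_of_x_mem (l := i + 1) (i := k) (k := k + 1) (by omega) (by omega) (by omega) hd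
      (by rw [← hN]; exact ⟨h, hP.x_mem (by omega)⟩)
    omega
  · obtain h | h | h : c ∈ ({x k, x (k + 1), d} : Set V) := by rw [← hN]; exact ⟨h, hA hc⟩
    · exact absurd (h ▸ hc) (hP.x_notMem (by omega))
    · exact absurd (h ▸ hc) (hP.x_notMem (by omega))
    · exact h

theorem exists_adj_x_of_not_adj [Finite V] (hP : IsAltPath G K I A j w x)
    (hfree : StarFree G 4) (hK : G.IsClique K) (hI : IndepOn G I) (hKI : Disjoint K I)
    (hub : (G.neighborSet (w (i + 1)) ∩ I).ncard ≤ 3) (hA : A ⊆ I) (hi : i + 2 < j)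
    {c u : V} (hc : c ∈ A) (hwc : G.Adj (w (i + 1)) c) (hu : u ∈ K) (huc : ¬ G.Adj u c) :
    ∃ l, i ≤ l ∧ l ≤ i + 1 ∧ G.Adj u (x l) := by
  have hw := hP.w_mem (i := i + 1) (by omega)
  have hwu : w (i + 1) ≠ u := by
    rintro rfl
    exact huc hwc
  rcases hP.adj_of_adj_interior hfree hI hub hA hi hc hwc (hK hw hu hwu)
    (Set.disjoint_left.mp hKI hu) with h | h | h
  · exact ⟨i, le_rfl, by omega, h⟩
  · exact ⟨i + 1, by omega, le_rfl, h⟩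
  · exact absurd h huc

theorem three_lt_ncard [Finite V] (hP : IsAltPath G K I A j w x) (hA : A ⊆ I) {u a : V}
    (ha : a ∈ A) (hua : G.Adj u a) {l₀ l₁ l₂ : ℕ} (h₀₁ : l₀ < l₁) (h₁₂ : l₁ < l₂) (h₂ : l₂ < j - 1)
    (hu₀ : G.Adj u (x l₀)) (hu₁ : G.Adj u (x l₁)) (hu₂ : G.Adj u (x l₂)) :
    3 < (G.neighborSet u ∩ I).ncard := by
  by_contra! hcard
  have hN := Set.eq_triple_of_ncard_le_three (Set.toFinite _) hcard
    ⟨hu₀, hP.x_mem (by omega)⟩ ⟨hu₁, hP.x_mem (by omega)⟩ ⟨hua, hA ha⟩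
    (hP.x_ne (by omega) (by omega) (by omega))
    (fun h => hP.x_notMem (i := l₀) (by omega) (h ▸ ha))
    (fun h => hP.x_notMem (i := l₁) (by omega) (h ▸ ha))
  have := hP.eq_or_eq_of_x_mem (i := l₀) (k := l₁) h₂ (by omega) (by omega) ha (by rw [← hN]; exact ⟨hu₂, hP.x_mem h₂⟩)
  omega

end IsAltPath

theorem no_path_on_thirteen_vertices_general [Fintype V] (G : SimpleGraph V)
    (K I : Set V) (hsplit : SplitPartition G K I) (hmax : MaxClique G K)
    (hfree : StarFree G 4)
    (hub : ∀ u ∈ K, (G.neighborSet u ∩ I).ncard ≤ 3)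
    (v : V) (hv : v ∈ K) (hdeg : (G.neighborSet v ∩ I).ncard = 3) :
    ¬ ∃ j, 7 ≤ j ∧ ∃ w x : ℕ → V,
        IsAltPath G K I (G.neighborSet v ∩ I) j w x := by
  rintro ⟨j, hj, w, x, hP⟩
  obtain ⟨hKI, -, hK, hI⟩ := hsplit
  have hAI : G.neighborSet v ∩ I ⊆ I := Set.inter_subset_right
  have hseesA : ∀ p ∈ K, p ≠ v → ∃ a ∈ G.neighborSet v ∩ I, G.Adj p a := fun p hp hpv =>
    hfree.exists_adj_of_ncard_eq_three hI hdeg (hK hv hp hpv.symm) (Set.disjoint_left.mp hKI hp)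
  have hinterior : ∀ i, i + 2 < j → ∃ a ∈ G.neighborSet v ∩ I, G.Adj (w (i + 1)) a :=
    fun i hi => hseesA _ (hP.w_mem (by omega)) (hP.w_succ_ne (by omega))
  have : Nonempty V := ⟨v⟩
  choose! c hcA hwc using hinterior
  have hc₂ : c 0 = c 2 := hP.eq_of_adj_interior hfree hK hI hKI hub hAI (by omega) (by omega)
    (hcA 0 (by omega)) (hwc 0 (by omega)) (hcA 2 (by omega)) (hwc 2 (by omega))
  have hc₄ : c 0 = c 4 := hP.eq_of_adj_interior hfree hK hI hKI hub hAI (by omega) (by omega)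
    (hcA 0 (by omega)) (hwc 0 (by omega)) (hcA 4 (by omega)) (hwc 4 (by omega))
  obtain ⟨u, hu, huc⟩ :=
    hmax.exists_not_adj fun h => Set.disjoint_left.mp hKI h (hcA 0 (by omega)).2
  obtain ⟨a, ha, hua⟩ := hseesA u hu (by rintro rfl; exact huc (hcA 0 (by omega)).1)
  have husees (i) (hi : i + 2 < j) (h : ¬ G.Adj u (c i)) :=
    hP.exists_adj_x_of_not_adj hfree hK hI hKI (hub _ (hP.w_mem (by omega))) hAI hi
      (hcA i hi) (hwc i hi) hu h
  obtain ⟨l₀, -, _, h₀⟩ := husees 0 (by omega) huc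
  obtain ⟨l₁, _, _, h₁⟩ := husees 2 (by omega) (hc₂ ▸ huc)
  obtain ⟨l₂, _, _, h₂⟩ := husees 4 (by omega) (hc₄ ▸ huc)
  exact (hub u hu).not_gt
    (hP.three_lt_ncard hAI ha hua (by omega) (by omega) (by omega) h₀ h₁ h₂)

/-- In a 2-connected `K_{1,4}`-free split graph with `|K| ≥ |I| ≥ 8`,
`Δ^I = 3` and no short cycles, there is no alternating path on 13 or more
vertices (i.e. with `j ≥ 7` clique vertices) in `G - N^I(v)`. -/
theorem no_path_on_thirteen_vertices [Fintype V] (G : SimpleGraph V)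
    (K I : Set V) (hsplit : SplitPartition G K I) (hmax : MaxClique G K)
    (h2 : TwoConnected G) (hfree : StarFree G 4)
    (hI : 8 ≤ I.ncard) (hKI : I.ncard ≤ K.ncard)
    (hub : ∀ u ∈ K, (G.neighborSet u ∩ I).ncard ≤ 3)
    (v : V) (hv : v ∈ K) (hdeg : (G.neighborSet v ∩ I).ncard = 3)
    (hshort : ¬ HasShortCycle G K I) :
    ¬ ∃ j, 7 ≤ j ∧ ∃ w x : ℕ → V,
        IsAltPath G K I (G.neighborSet v ∩ I) j w x :=
  no_path_on_thirteen_vertices_general G K I hsplit hmax hfree hub v hv hdeg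
end

section
/- Let G be a split graph with maximum clique K and independent set I, and let P = (w_1,...,w_i; x_1,...,x_{i-1}) and Q = (s_1,...,s_j; t_1,...,t_{j-1}) with i, j ≥ 3 be two vertex-disjoint alternating paths (w's, s's in K; x's, t's in I) in G − N^I(v), where v ∈ K has N^I(v) of size 3 and G is K_{1,4}-free. Then there exists a single vertex v_1 ∈ N^I(v) adjacent to all internal clique vertices w_2,...,w_{i-1} and s_2,...,s_{j-1} of both paths. -/
open SimpleGraph

variable {V : Type*}

/-! A clique vertex `u ≠ v` is adjacent to `v`, so it must have a neighbour in `N^I(v)`: otherwise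
`v` with the three vertices of `N^I(v)` and `u` as leaves is a `K_{1,4}`. An internal clique
vertex of an alternating path in `G - N^I(v)` thus has three independent neighbours, its two path
neighbours and some `z ∈ N^I(v)`, and by `K_{1,4}`-freeness no further neighbour in `I`. Any other
clique vertex missing both path neighbours of such a vertex is a potential fourth leaf, hence is
adjacent to `z`. Applied with centre `s 1`, whose path neighbours `t 0, t 1` are missed by the
internal vertices of `P`, this makes all of them adjacent to the `z` of `s 1`; applied again with
centre `w 1`, it makes the internal vertices of `Q` adjacent to the same `z`. -/

section

variable {G : SimpleGraph V} {K I : Set V}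

theorem StarFree.adj_of_three_indep_nbrs (hfree : StarFree G 4) (hI : IndepOn G I)
    {c a b d e : V} (ha : a ∈ I) (hb : b ∈ I) (hd : d ∈ I)
    (hab : a ≠ b) (had : a ≠ d) (hbd : b ≠ d)
    (hca : G.Adj c a) (hcb : G.Adj c b) (hcd : G.Adj c d) (hce : G.Adj c e)
    (hea : e ≠ a) (heb : e ≠ b) (hed : e ≠ d) :
    G.Adj e a ∨ G.Adj e b ∨ G.Adj e d := by
  classical
  by_contra! hne
  obtain ⟨hna, hnb, hnd⟩ := hne
  refine hfree ⟨c, {a, b, d, e}, ?_, ?_, ?_, ?_⟩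
  · simp [Finset.card_insert_of_notMem, hab, had, hbd, hea.symm, heb.symm, hed.symm]
  · simp [hca.ne, hcb.ne, hcd.ne, hce.ne]
  · simp [hca, hcb, hcd, hce]
  · simp only [Finset.mem_insert, Finset.mem_singleton]
    rintro l (rfl | rfl | rfl | rfl) m (rfl | rfl | rfl | rfl) hlm <;>
      first
        | exact absurd rfl hlm
        | exact hI ‹_› ‹_›
        | assumption
        | exact fun h => ‹¬ G.Adj _ _› h.symm

theorem StarFree.eq_of_three_indep_nbrs (hfree : StarFree G 4) (hI : IndepOn G I)
    {c a b d y : V} (ha : a ∈ I) (hb : b ∈ I) (hd : d ∈ I)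
    (hab : a ≠ b) (had : a ≠ d) (hbd : b ≠ d)
    (hca : G.Adj c a) (hcb : G.Adj c b) (hcd : G.Adj c d) (hy : y ∈ I) (hcy : G.Adj c y) :
    y = a ∨ y = b ∨ y = d := by
  by_contra! hne
  obtain ⟨hya, hyb, hyd⟩ := hne
  rcases hfree.adj_of_three_indep_nbrs hI ha hb hd hab had hbd hca hcb hcd hcy hya hyb hyd
    with h | h | h
  · exact hI hy ha h
  · exact hI hy hb h
  · exact hI hy hd h

theorem StarFree.adj_of_not_adj_of_not_adj (hfree : StarFree G 4) (hI : IndepOn G I)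
    {c a b d e : V} (ha : a ∈ I) (hb : b ∈ I) (hd : d ∈ I)
    (hab : a ≠ b) (had : a ≠ d) (hbd : b ≠ d)
    (hca : G.Adj c a) (hcb : G.Adj c b) (hcd : G.Adj c d) (hce : G.Adj c e) (he : e ∉ I)
    (hea : ¬ G.Adj e a) (heb : ¬ G.Adj e b) : G.Adj e d := by
  have hne : ∀ {y}, y ∈ I → e ≠ y := fun hy h => he (h ▸ hy)
  rcases hfree.adj_of_three_indep_nbrs hI ha hb hd hab had hbd hca hcb hcd hce
    (hne ha) (hne hb) (hne hd) with h | h | h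
  · exact absurd h hea
  · exact absurd h heb
  · exact h

theorem StarFree.exists_adj_of_ncard_nbrs_eq_three (hfree : StarFree G 4) (hI : IndepOn G I)
    {v u : V} (hdeg : (G.neighborSet v ∩ I).ncard = 3) (hvu : G.Adj v u) (hu : u ∉ I) :
    ∃ z ∈ G.neighborSet v ∩ I, G.Adj u z := by
  obtain ⟨a, b, d, hab, had, hbd, hA⟩ := Set.ncard_eq_three.mp hdeg
  have hmem : a ∈ G.neighborSet v ∩ I ∧ b ∈ G.neighborSet v ∩ I ∧ d ∈ G.neighborSet v ∩ I := by
    simp only [hA, Set.mem_insert_iff, Set.mem_singleton_iff, true_or, or_true, and_self]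
  obtain ⟨⟨hva, ha⟩, ⟨hvb, hb⟩, ⟨hvd, hd⟩⟩ := hmem
  have hne : ∀ {y}, y ∈ I → u ≠ y := fun hy h => hu (h ▸ hy)
  rcases hfree.adj_of_three_indep_nbrs hI ha hb hd hab had hbd hva hvb hvd hvu
    (hne ha) (hne hb) (hne hd) with h | h | h
  · exact ⟨a, ⟨hva, ha⟩, h⟩
  · exact ⟨b, ⟨hvb, hb⟩, h⟩
  · exact ⟨d, ⟨hvd, hd⟩, h⟩

theorem StarFree.eq_or_eq_of_two_nbrs_outside (hfree : StarFree G 4) (hI : IndepOn G I)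
    {v u p q y : V} (hdeg : (G.neighborSet v ∩ I).ncard = 3) (hvu : G.Adj v u) (hu : u ∉ I)
    (hp : p ∈ I \ (G.neighborSet v ∩ I)) (hq : q ∈ I \ (G.neighborSet v ∩ I)) (hpq : p ≠ q)
    (hup : G.Adj u p) (huq : G.Adj u q)
    (hy : y ∈ I \ (G.neighborSet v ∩ I)) (huy : G.Adj u y) : y = p ∨ y = q := by
  obtain ⟨z, hz, huz⟩ := hfree.exists_adj_of_ncard_nbrs_eq_three hI hdeg hvu hu
  have hne : ∀ {r}, r ∉ G.neighborSet v ∩ I → r ≠ z := fun hr h => hr (h ▸ hz)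
  rcases hfree.eq_of_three_indep_nbrs hI hp.1 hq.1 hz.2 hpq (hne hp.2) (hne hq.2)
    hup huq huz hy.1 huy with h | h | h
  · exact Or.inl h
  · exact Or.inr h
  · exact absurd h (hne hy.2)

namespace IsAltPath

variable {A : Set V} {v : V} {i j k : ℕ} {w x s t : ℕ → V}

theorem internal_nbrs (hP : IsAltPath G K I A j w x) (hk1 : 1 ≤ k) (hk : k < j - 1) :
    x (k - 1) ≠ x k ∧ (x (k - 1) ∈ I \ A ∧ G.Adj (w k) (x (k - 1))) ∧
      (x k ∈ I \ A ∧ G.Adj (w k) (x k)) := by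
  obtain ⟨-, -, hx, -, hxinj, -, hadj⟩ := hP
  have hprev := (hadj (k - 1) (by omega)).2
  rw [Nat.sub_add_cancel hk1] at hprev
  exact ⟨fun h => by have := hxinj _ (by omega) _ hk h; omega,
    ⟨hx _ (by omega), hprev⟩, ⟨hx _ hk, (hadj k hk).1⟩⟩

theorem adj_internal (hK : G.IsClique K) (hv : v ∈ K)
    (hP : IsAltPath G K I (G.neighborSet v ∩ I) j w x) (hk1 : 1 ≤ k) (hk : k < j - 1) :
    G.Adj v (w k) := by
  obtain ⟨-, -, ⟨hxI, hxA⟩, hwx⟩ := hP.internal_nbrs hk1 hk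
  exact hK hv (hP.2.1 k (by omega)).1
    (G.ne_of_adj_of_not_adj hwx fun h => hxA ⟨h, hxI⟩).symm

theorem exists_adj_nbrs_inter (hfree : StarFree G 4) (hI : IndepOn G I) (hK : G.IsClique K)
    (hKI : Disjoint K I) (hv : v ∈ K) (hdeg : (G.neighborSet v ∩ I).ncard = 3)
    (hP : IsAltPath G K I (G.neighborSet v ∩ I) j w x) (hk1 : 1 ≤ k) (hk : k < j - 1) :
    ∃ z ∈ G.neighborSet v ∩ I, G.Adj (w k) z :=
  hfree.exists_adj_of_ncard_nbrs_eq_three hI hdeg (hP.adj_internal hK hv hk1 hk)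
    (Set.disjoint_left.mp hKI (hP.2.1 k (by omega)).1)

theorem mem_altPathVerts_of_adj (hfree : StarFree G 4) (hI : IndepOn G I) (hK : G.IsClique K)
    (hKI : Disjoint K I) (hv : v ∈ K) (hdeg : (G.neighborSet v ∩ I).ncard = 3)
    (hP : IsAltPath G K I (G.neighborSet v ∩ I) j w x) (hk1 : 1 ≤ k) (hk : k < j - 1)
    {y : V} (hy : y ∈ I \ (G.neighborSet v ∩ I)) (hwy : G.Adj (w k) y) :
    y ∈ altPathVerts j w x := by
  obtain ⟨hx, ⟨hprev, hwprev⟩, ⟨hnext, hwnext⟩⟩ := hP.internal_nbrs hk1 hk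
  rcases hfree.eq_or_eq_of_two_nbrs_outside hI hdeg (hP.adj_internal hK hv hk1 hk)
    (Set.disjoint_left.mp hKI (hP.2.1 k (by omega)).1) hprev hnext hx hwprev hwnext hy hwy
    with rfl | rfl
  · exact Or.inr ⟨k - 1, by omega, rfl⟩
  · exact Or.inr ⟨k, hk, rfl⟩

theorem adj_internal_of_adj_second (hfree : StarFree G 4) (hI : IndepOn G I)
    (hK : G.IsClique K) (hKI : Disjoint K I) (hv : v ∈ K)
    (hdeg : (G.neighborSet v ∩ I).ncard = 3) (hP : IsAltPath G K I (G.neighborSet v ∩ I) i w x)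
    (hi : 3 ≤ i) (hQ : IsAltPath G K I (G.neighborSet v ∩ I) j s t)
    (hdisj : Disjoint (altPathVerts i w x) (altPathVerts j s t))
    {z : V} (hz : z ∈ G.neighborSet v ∩ I) (hwz : G.Adj (w 1) z) (hk1 : 1 ≤ k) (hk : k < j - 1) :
    G.Adj z (s k) := by
  obtain ⟨hx01, ⟨hx0, hwx0⟩, ⟨hx1, hwx1⟩⟩ := hP.internal_nbrs le_rfl (by omega)
  have hw1K := (hP.2.1 1 (by omega)).1
  have hskK := (hQ.2.1 k (by omega)).1
  have hw1s : w 1 ≠ s k := fun h =>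
    Set.disjoint_left.mp hdisj (Or.inl ⟨1, by omega, rfl⟩) (h ▸ Or.inl ⟨k, by omega, rfl⟩)
  have hnot : ∀ y ∈ altPathVerts i w x, y ∈ I \ (G.neighborSet v ∩ I) → ¬ G.Adj (s k) y :=
    fun y hyP hy h => Set.disjoint_left.mp hdisj hyP
      (hQ.mem_altPathVerts_of_adj hfree hI hK hKI hv hdeg hk1 hk hy h)
  have hne : ∀ {r}, r ∉ G.neighborSet v ∩ I → r ≠ z := fun hr h => hr (h ▸ hz)
  exact (hfree.adj_of_not_adj_of_not_adj hI hx0.1 hx1.1 hz.2 hx01 (hne hx0.2) (hne hx1.2)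
    hwx0 hwx1 hwz (hK hw1K hskK hw1s) (Set.disjoint_left.mp hKI hskK)
    (hnot _ (Or.inr ⟨0, by omega, rfl⟩) hx0) (hnot _ (Or.inr ⟨1, by omega, rfl⟩) hx1)).symm

end IsAltPath

end

theorem universal_vertex_for_two_paths_general (G : SimpleGraph V)
    (K I : Set V) (hsplit : SplitPartition G K I)
    (hfree : StarFree G 4) (v : V) (hv : v ∈ K)
    (hdeg : (G.neighborSet v ∩ I).ncard = 3)
    (i j : ℕ) (hi : 3 ≤ i) (hj : 3 ≤ j) (w x s t : ℕ → V)
    (hP : IsAltPath G K I (G.neighborSet v ∩ I) i w x)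
    (hQ : IsAltPath G K I (G.neighborSet v ∩ I) j s t)
    (hdisj : Disjoint (altPathVerts i w x) (altPathVerts j s t)) :
    ∃ v₁ ∈ G.neighborSet v ∩ I,
      (∀ k, 1 ≤ k → k < i - 1 → G.Adj v₁ (w k)) ∧
      (∀ k, 1 ≤ k → k < j - 1 → G.Adj v₁ (s k)) := by
  obtain ⟨hKI, -, hK, hI⟩ := hsplit
  obtain ⟨z, hz, hs₁z⟩ :=
    hQ.exists_adj_nbrs_inter hfree hI hK hKI hv hdeg le_rfl (by omega : 1 < j - 1)
  have hPz : ∀ k, 1 ≤ k → k < i - 1 → G.Adj z (w k) := fun _ hk1 hk =>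
    hQ.adj_internal_of_adj_second hfree hI hK hKI hv hdeg hj hP hdisj.symm hz hs₁z hk1 hk
  exact ⟨z, hz, hPz, fun _ hk1 hk =>
    hP.adj_internal_of_adj_second hfree hI hK hKI hv hdeg hi hQ hdisj hz
      (hPz 1 le_rfl (by omega)).symm hk1 hk⟩

/-- For two vertex-disjoint alternating paths in `G - N^I(v)`, each with at
least 3 clique vertices, a single `v₁ ∈ N^I(v)` is adjacent to all internal
clique vertices of both paths. -/
theorem universal_vertex_for_two_paths [Fintype V] (G : SimpleGraph V)
    (K I : Set V) (hsplit : SplitPartition G K I) (hmax : MaxClique G K)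
    (hfree : StarFree G 4) (v : V) (hv : v ∈ K)
    (hdeg : (G.neighborSet v ∩ I).ncard = 3)
    (i j : ℕ) (hi : 3 ≤ i) (hj : 3 ≤ j) (w x s t : ℕ → V)
    (hP : IsAltPath G K I (G.neighborSet v ∩ I) i w x)
    (hQ : IsAltPath G K I (G.neighborSet v ∩ I) j s t)
    (hdisj : Disjoint (altPathVerts i w x) (altPathVerts j s t)) :
    ∃ v₁ ∈ G.neighborSet v ∩ I,
      (∀ k, 1 ≤ k → k < i - 1 → G.Adj v₁ (w k)) ∧
      (∀ k, 1 ≤ k → k < j - 1 → G.Adj v₁ (s k)) :=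
  universal_vertex_for_two_paths_general G K I hsplit hfree v hv hdeg i j hi hj w x s t hP hQ hdisj
end

section
/- Let G be a bipartite graph with parts A and B, and let H_1 (resp. H_2) be the split graph obtained by completing A (resp. B) to a clique. Then G has a Hamiltonian cycle if and only if both H_1 and H_2 have Hamiltonian cycles. -/
open SimpleGraph

variable {V : Type*}

/-- `(A, B)` is a bipartition of `G`. -/
def BipartitionOn (G : SimpleGraph V) (A B : Set V) : Prop :=
  Disjoint A B ∧ A ∪ B = Set.univ ∧
    ∀ ⦃u v⦄, G.Adj u v → (u ∈ A ∧ v ∈ B) ∨ (u ∈ B ∧ v ∈ A)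

/-- The graph obtained from `G` by adding all edges between pairs of distinct
vertices of `A`. -/
def completeSide (G : SimpleGraph V) (A : Set V) : SimpleGraph V where
  Adj u v := G.Adj u v ∨ (u ∈ A ∧ v ∈ A ∧ u ≠ v)
  symm := by
    constructor
    intro u v h
    rcases h with h | ⟨ha, hb, hne⟩
    · exact Or.inl h.symm
    · exact Or.inr ⟨hb, ha, hne.symm⟩
  loopless := by
    constructor
    intro u h
    rcases h with h | ⟨_, _, hne⟩
    · exact (G.ne_of_adj h) rfl
    · exact hne rfl

/-! If `S` is independent in a graph with a Hamiltonian cycle, every dart of the cycle leaving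
`S` enters `Sᶜ`; since each vertex is left once and entered once, counting the darts entering
`Sᶜ` gives `|Sᶜ| = |S| + #(cycle edges inside Sᶜ)`. In `H₂` this gives `|A| ≤ |B|`, and in
`H₁` it gives `|B| ≤ |A|` with equality only if no edge of the cycle lies inside `A`, i.e. the
Hamiltonian cycle of `H₁` is already a cycle of `G`. -/

namespace SimpleGraph.Walk

variable {G H : SimpleGraph V} {a : V}

theorem countP_darts_fst_eq_countP_darts_snd (p : G.Walk a a) (P : V → Bool) :
    p.darts.countP (fun d => P d.fst) = p.darts.countP (fun d => P d.snd) := by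
  have h := (p.tail_support_perm_dropLast_support.countP_eq P).symm
  rwa [← map_fst_darts, ← map_snd_darts, List.countP_map, List.countP_map] at h

variable [DecidableEq V] {p : G.Walk a a}

theorem IsHamiltonianCycle.transfer (hp : p.IsHamiltonianCycle)
    (hH : ∀ e ∈ p.edges, e ∈ H.edgeSet) : (p.transfer H hH).IsHamiltonianCycle := by
  rw [isHamiltonianCycle_iff_isCycle_and_support_count_tail_eq_one] at hp ⊢
  exact ⟨hp.1.transfer hH, by rw [support_transfer]; exact hp.2⟩

theorem IsHamiltonianCycle.countP_darts_snd_mem (hp : p.IsHamiltonianCycle) (S : Set V)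
    [DecidablePred (· ∈ S)] : p.darts.countP (fun d => d.snd ∈ S) = S.ncard := by
  have hmem (v : V) : v ∈ p.support.tail :=
    support_tail_of_not_nil p hp.not_nil ▸ hp.isHamiltonian_tail.mem_support v
  have hS : ((p.support.tail.filter (· ∈ S)).toFinset : Set V) = S := by
    ext v
    simpa using fun _ => hmem v
  rw [← congrArg Set.ncard hS, Set.ncard_coe_finset,
    List.toFinset_card_of_nodup (hp.support_nodup.filter _), ← List.countP_eq_length_filter,
    ← map_snd_darts, List.countP_map]
  rfl

theorem IsHamiltonianCycle.ncard_compl_eq_of_indepOn (hp : p.IsHamiltonianCycle) {S : Set V}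
    [DecidablePred (· ∈ S)] (hS : IndepOn G S) :
    Sᶜ.ncard = S.ncard + p.darts.countP (fun d => d.fst ∉ S ∧ d.snd ∉ S) := by
  have hsplit := p.darts.countP_eq_countP_filter_add (fun d => d.snd ∉ S) (fun d => d.fst ∈ S)
  rw [List.countP_filter, List.countP_filter] at hsplit
  have hleave : p.darts.countP (fun d => d.snd ∉ S && d.fst ∈ S) =
      p.darts.countP (fun d => d.fst ∈ S) :=
    List.countP_congr fun d _ => by simpa using fun hfst hsnd => hS hfst hsnd d.adj
  have hstay : p.darts.countP (fun d => d.snd ∉ S && !d.fst ∈ S) =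
      p.darts.countP (fun d => d.fst ∉ S ∧ d.snd ∉ S) :=
    List.countP_congr fun d _ => by simp [and_comm]
  rw [← hp.countP_darts_snd_mem, ← hp.countP_darts_snd_mem,
    ← countP_darts_fst_eq_countP_darts_snd p (· ∈ S), ← hleave, ← hstay, ← hsplit]
  rfl

theorem IsHamiltonianCycle.ncard_le_ncard_compl_of_indepOn (hp : p.IsHamiltonianCycle)
    {S : Set V} (hS : IndepOn G S) : S.ncard ≤ Sᶜ.ncard := by
  classical
  rw [hp.ncard_compl_eq_of_indepOn hS]
  exact Nat.le_add_right _ _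

theorem IsHamiltonianCycle.mem_or_mem_of_indepOn_of_ncard_compl_le (hp : p.IsHamiltonianCycle)
    {S : Set V} (hS : IndepOn G S) (hcard : Sᶜ.ncard ≤ S.ncard) :
    ∀ d ∈ p.darts, d.fst ∈ S ∨ d.snd ∈ S := by
  classical
  have hzero : p.darts.countP (fun d => d.fst ∉ S ∧ d.snd ∉ S) = 0 := by
    have := hp.ncard_compl_eq_of_indepOn hS
    omega
  intro d hd
  by_contra! hout
  exact List.countP_eq_zero.1 hzero d hd (by simpa using hout)

end SimpleGraph.Walk

theorem HasHamCycle.mono {G H : SimpleGraph V} (hGH : G ≤ H) (hG : HasHamCycle G) :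
    HasHamCycle H := by
  classical
  obtain ⟨a, p, hp⟩ := hG
  exact ⟨a, p.map (.ofLE hGH), hp.map Function.bijective_id⟩

theorem le_completeSide (G : SimpleGraph V) (A : Set V) : G ≤ completeSide G A :=
  fun _ _ => Or.inl

namespace BipartitionOn

variable {G : SimpleGraph V} {A B : Set V}

theorem symm (h : BipartitionOn G A B) : BipartitionOn G B A :=
  ⟨h.1.symm, Set.union_comm A B ▸ h.2.1, fun _ _ huv => (h.2.2 huv).symm⟩

theorem compl_right (h : BipartitionOn G A B) : Bᶜ = A :=
  (IsCompl.of_eq h.1.eq_bot h.2.1).symm.compl_eq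

theorem indepOn_completeSide (h : BipartitionOn G A B) : IndepOn (completeSide G A) B := by
  rintro u hu v hv (huv | ⟨huA, -, -⟩)
  · rcases h.2.2 huv with ⟨huA, -⟩ | ⟨-, hvA⟩
    · exact h.1.notMem_of_mem_left huA hu
    · exact h.1.notMem_of_mem_left hvA hv
  · exact h.1.notMem_of_mem_left huA hu

theorem ncard_le_of_hasHamCycle_completeSide (h : BipartitionOn G A B)
    (hH : HasHamCycle (completeSide G A)) : B.ncard ≤ A.ncard := by
  classical
  obtain ⟨a, p, hp⟩ := hH
  exact h.compl_right ▸ hp.ncard_le_ncard_compl_of_indepOn h.indepOn_completeSide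

theorem hasHamCycle_of_completeSide (h : BipartitionOn G A B)
    (hH : HasHamCycle (completeSide G A)) (hcard : A.ncard ≤ B.ncard) : HasHamCycle G := by
  classical
  obtain ⟨a, p, hp⟩ := hH
  have hmeet := hp.mem_or_mem_of_indepOn_of_ncard_compl_le h.indepOn_completeSide
    (h.compl_right ▸ hcard)
  have hG : ∀ e ∈ p.edges, e ∈ G.edgeSet := by
    intro e he
    obtain ⟨d, hd, rfl⟩ := List.mem_map.1 he
    rcases d.adj with hGd | ⟨hfst, hsnd, -⟩
    · exact hGd
    · rcases hmeet d hd with hB | hB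
      · exact absurd hB (h.1.notMem_of_mem_left hfst)
      · exact absurd hB (h.1.notMem_of_mem_left hsnd)
  exact ⟨a, p.transfer G hG, hp.transfer hG⟩

end BipartitionOn

theorem bipartite_hamiltonian_iff_both_completions_general
    (G : SimpleGraph V) (A B : Set V) (hbip : BipartitionOn G A B) :
    HasHamCycle G ↔
      HasHamCycle (completeSide G A) ∧ HasHamCycle (completeSide G B) :=
  ⟨fun hG => ⟨hG.mono (le_completeSide G A), hG.mono (le_completeSide G B)⟩,
    fun ⟨hA, hB⟩ => hbip.hasHamCycle_of_completeSide hA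
      (hbip.symm.ncard_le_of_hasHamCycle_completeSide hB)⟩

/-- A bipartite graph `G` with parts `A, B` has a Hamiltonian cycle iff both
split graphs `H₁` (completing `A`) and `H₂` (completing `B`) do. -/
theorem bipartite_hamiltonian_iff_both_completions [Fintype V]
    (G : SimpleGraph V) (A B : Set V) (hbip : BipartitionOn G A B) :
    HasHamCycle G ↔
      HasHamCycle (completeSide G A) ∧ HasHamCycle (completeSide G B) :=
  bipartite_hamiltonian_iff_both_completions_general G A B hbip
end
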